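/- arXiv:2001.03262 — 2 statements merged into one kernel-verified Lean document; each statement's English description precedes it below -/
import Mathlib

section
/- Let f ∈ ℝ[x₁,…,xₙ] be a gem regular polynomial satisfying conditions (C1), (C2) and (C3). Then for any sequence of points (xᵏ)_{k∈ℕ} in ℝⁿ with ‖xᵏ‖ → +∞ there exists some ε > 0 such that f(xᵏ) ≥ ε·f^{V(f)}(xᵏ) holds for almost all k ∈ ℕ, where f^{V(f)}(x) := Σ_{α∈V(f)} f_α x^α. -/
open MvPolynomial Filter

noncomputable section

open scoped Classical

/-- The embedding of exponent vectors into `ℝⁿ`. -/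
def expEmbed {n : ℕ} (α : Fin n →₀ ℕ) : Fin n → ℝ := fun i => (α i : ℝ)

/-- The Newton polytope at infinity `New∞(f) = conv(A(f) ∪ {0})`. -/
def newtonInfty {n : ℕ} (f : MvPolynomial (Fin n) ℝ) : Set (Fin n → ℝ) :=
  convexHull ℝ (expEmbed '' ((insert 0 f.support : Finset (Fin n →₀ ℕ)) : Set (Fin n →₀ ℕ)))

/-- The vertex set `V₀(f)` of the Newton polytope at infinity, as a
finset of exponent vectors. -/
def V0 {n : ℕ} (f : MvPolynomial (Fin n) ℝ) : Finset (Fin n →₀ ℕ) :=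
  (insert 0 f.support).filter fun α => expEmbed α ∈ Set.extremePoints ℝ (newtonInfty f)

/-- The set `V(f) = V₀(f) \ {0}` of vertices at infinity. -/
def Vinf {n : ℕ} (f : MvPolynomial (Fin n) ℝ) : Finset (Fin n →₀ ℕ) := (V0 f).erase 0

/-- An exponent vector with all entries even, i.e. a member of `(2ℕ₀)ⁿ`. -/
def IsEvenExp {n : ℕ} (α : Fin n →₀ ℕ) : Prop := ∀ i, Even (α i)

/-- Condition (C1): `V(f) ⊆ (2ℕ₀)ⁿ`. -/
def CondC1 {n : ℕ} (f : MvPolynomial (Fin n) ℝ) : Prop := ∀ α ∈ Vinf f, IsEvenExp α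

/-- Condition (C2): positive coefficients at all vertices at infinity. -/
def CondC2 {n : ℕ} (f : MvPolynomial (Fin n) ℝ) : Prop := ∀ α ∈ Vinf f, 0 < f.coeff α

/-- Condition (C3): `V(f)` contains a vector `2 kᵢ eᵢ` for every `i`. -/
def CondC3 {n : ℕ} (f : MvPolynomial (Fin n) ℝ) : Prop :=
  ∀ i : Fin n, ∃ k : ℕ, 0 < k ∧ Finsupp.single i (2 * k) ∈ Vinf f

/-- An exponent vector of `f` is gem degenerate if it is no vertex at infinity but lies in
some nonempty face of `New∞(f)` not containing the origin. -/
def IsGemDegenerate {n : ℕ} (f : MvPolynomial (Fin n) ℝ) (α : Fin n →₀ ℕ) : Prop :=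
  α ∈ f.support ∧ α ∉ Vinf f ∧
    ∃ G : Set (Fin n → ℝ), G.Nonempty ∧ IsExtreme ℝ (newtonInfty f) G ∧
      (0 : Fin n → ℝ) ∉ G ∧ expEmbed α ∈ G

/-- The set `D(f)` of gem degenerate exponent vectors of `f`. -/
def Dfin {n : ℕ} (f : MvPolynomial (Fin n) ℝ) : Finset (Fin n →₀ ℕ) :=
  f.support.filter fun α => IsGemDegenerate f α

/-- `f` is gem regular if `D(f) = ∅`. -/
def GemRegular {n : ℕ} (f : MvPolynomial (Fin n) ℝ) : Prop := ∀ α, ¬ IsGemDegenerate f α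

/-- `V₀ᶜ(f) = A(f) \ V₀(f)`. -/
def V0c {n : ℕ} (f : MvPolynomial (Fin n) ℝ) : Finset (Fin n →₀ ℕ) := f.support \ V0 f

/-- A map of minimal barycentric coordinates of `f`. -/
def IsMinBary {n : ℕ} (f : MvPolynomial (Fin n) ℝ)
    (lam : (Fin n →₀ ℕ) → (Fin n →₀ ℕ) → ℝ) : Prop :=
  (∀ αs α, 0 ≤ lam αs α ∧ lam αs α ≤ 1) ∧
  ∀ αs ∈ V0c f, ∃ W : Finset (Fin n →₀ ℕ), W ⊆ V0 f ∧
    AffineIndependent ℝ (fun w : W => expEmbed (w : Fin n →₀ ℕ)) ∧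
    (∀ α ∈ W, 0 < lam αs α) ∧
    (∀ α ∈ V0 f, α ∉ W → lam αs α = 0) ∧
    (∑ α ∈ W, lam αs α) = 1 ∧
    (∑ α ∈ W, lam αs α • expEmbed α) = expEmbed αs

/-- `W_{α*}(λ_f)`, the minimal vertex representation of `α*` corresponding to `λ_f`. -/
def Wfin {n : ℕ} (f : MvPolynomial (Fin n) ℝ)
    (lam : (Fin n →₀ ℕ) → (Fin n →₀ ℕ) → ℝ) (αs : Fin n →₀ ℕ) : Finset (Fin n →₀ ℕ) :=
  (V0 f).filter fun α => 0 < lam αs α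

/-- The circuit number `Θ(f, λ_f, α*)`. -/
def circuitNumber {n : ℕ} (f : MvPolynomial (Fin n) ℝ)
    (lam : (Fin n →₀ ℕ) → (Fin n →₀ ℕ) → ℝ) (αs : Fin n →₀ ℕ) : ℝ :=
  ∏ α ∈ Wfin f lam αs, (f.coeff α / lam αs α) ^ (lam αs α)

/-- `g` is coercive on `ℝⁿ`: `g(x) → +∞` whenever `‖x‖ → +∞`. -/
def Coercive {n : ℕ} (g : (Fin n → ℝ) → ℝ) : Prop :=
  Tendsto g (comap (fun x : Fin n → ℝ => ‖x‖) atTop) atTop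

/-!
Write `v = f^{V(f)}`. By (C1) and (C2) every monomial of `v` is nonnegative, so `v` dominates
each of its terms; by (C3) these include `c yᵢ^{2kᵢ}` for every `i`, hence `v → ∞` at infinity.

Let `α` be an exponent of `f` outside `V(f)`. For `P` convex and `a ∈ P`, the points `y ∈ P`
such that `a = y` or `a` lies in an open segment from `y` to a point of `P` form a face of `P`
through `a`. Gem regularity forces this face of `New∞(f)` through `α` to contain `0`, i.e.
`α = t z` with `0 < t < 1` and `z ∈ New∞(f) = conv V₀(f)`. Thus `α = ∑_{β ∈ V(f)} μ_β β` with
`μ ≥ 0` and `∑ μ_β < 1`, and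
`|y^α| = ∏ (y^β)^{μ_β} ≤ ∏ (v(y) / f_β)^{μ_β} = C v(y)^{∑ μ_β} = o(v(y))`.
Summing over such `α` gives `f - v = o(v)`, so `f ≥ v / 2` far out.
-/

open Asymptotics

section Faces

variable {𝕜 E : Type*} [Field 𝕜] [LinearOrder 𝕜] [IsStrictOrderedRing 𝕜] [AddCommGroup E]
  [Module 𝕜 E] {P : Set E}

theorem Convex.exists_mem_openSegment_of_openSegment_trans (hP : Convex 𝕜 P)
    {x₁ x₂ x z a : E} (hx₂ : x₂ ∈ P) (hz : z ∈ P) (hx : x ∈ openSegment 𝕜 x₁ x₂)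
    (ha : a ∈ openSegment 𝕜 x z) : ∃ p ∈ P, a ∈ openSegment 𝕜 x₁ p := by
  obtain ⟨c₁, c₂, hc₁, hc₂, hc, rfl⟩ := hx
  obtain ⟨d, e, hd, he, hde, rfl⟩ := ha
  have hr : 0 < d * c₂ + e := by positivity
  refine ⟨(d * c₂ / (d * c₂ + e)) • x₂ + (e / (d * c₂ + e)) • z,
    hP hx₂ hz (by positivity) (by positivity) (by field_simp),
    d * c₁, d * c₂ + e, by positivity, hr, by linear_combination d * hc + hde, ?_⟩
  rw [smul_add, smul_smul, smul_smul, mul_div_cancel₀ _ hr.ne', mul_div_cancel₀ _ hr.ne']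
  module

theorem Convex.isExtreme_setOf_eq_or_mem_openSegment (hP : Convex 𝕜 P) (a : E) :
    IsExtreme 𝕜 P {y | y ∈ P ∧ (y = a ∨ ∃ z ∈ P, a ∈ openSegment 𝕜 y z)} := by
  refine ⟨fun y hy => hy.1, ?_⟩
  rintro x₁ hx₁ x₂ hx₂ x ⟨-, rfl | ⟨z, hz, hxz⟩⟩ hx
  · exact ⟨hx₁, Or.inr ⟨x₂, hx₂, hx⟩⟩
  · exact ⟨hx₁, Or.inr (hP.exists_mem_openSegment_of_openSegment_trans hx₂ hz hx hxz)⟩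

theorem Convex.exists_mem_openSegment_zero (hP : Convex 𝕜 P) {a : E} (ha : a ∈ P) (ha0 : a ≠ 0)
    (h : ∀ G, IsExtreme 𝕜 P G → a ∈ G → (0 : E) ∈ G) : ∃ z ∈ P, a ∈ openSegment 𝕜 0 z := by
  obtain ⟨-, h0 | hz⟩ := h _ (hP.isExtreme_setOf_eq_or_mem_openSegment a) ⟨ha, Or.inl rfl⟩
  · exact absurd h0.symm ha0
  · exact hz

end Faces

theorem Finset.exists_weights_of_mem_convexHull_image {R E ι : Type*} [Field R] [LinearOrder R]
    [IsStrictOrderedRing R] [AddCommGroup E] [Module R E] {s : Finset ι} {v : ι → E}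
    (hv : Set.InjOn v s) {x : E} (hx : x ∈ convexHull R (v '' s)) :
    ∃ w : ι → R, (∀ i ∈ s, 0 ≤ w i) ∧ ∑ i ∈ s, w i = 1 ∧ ∑ i ∈ s, w i • v i = x := by
  classical
  rw [← Finset.coe_image, Finset.mem_convexHull'] at hx
  obtain ⟨w, hw₀, hw₁, hwx⟩ := hx
  refine ⟨w ∘ v, fun i hi => hw₀ _ (Finset.mem_image_of_mem v hi), ?_, ?_⟩
  · rwa [Finset.sum_image hv] at hw₁
  · rwa [Finset.sum_image (g := v) (f := fun y => w y • y) hv] at hwx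

theorem isLittleO_rpow_atTop_of_lt_one {s : ℝ} (hs : s < 1) :
    (fun x : ℝ => x ^ s) =o[atTop] fun x => x := by
  refine (isLittleO_iff_tendsto' ?_).2 ?_
  · filter_upwards [eventually_gt_atTop 0] with x hx h using absurd h hx.ne'
  · refine (tendsto_rpow_neg_atTop (sub_pos.2 hs)).congr' ?_
    filter_upwards [eventually_gt_atTop 0] with x hx
    rw [neg_sub, Real.rpow_sub_one hx.ne']

section Monomials

variable {ι : Type*} [Fintype ι] {S : Finset (ι →₀ ℕ)} {μ : (ι →₀ ℕ) → ℝ} {α : ι →₀ ℕ}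

theorem abs_prod_pow_eq_prod_rpow (heven : ∀ β ∈ S, ∀ i, Even (β i)) (hμ : ∀ β ∈ S, 0 ≤ μ β)
    (hα : ∀ i, (α i : ℝ) = ∑ β ∈ S, μ β * β i) (y : ι → ℝ) :
    |∏ i, y i ^ α i| = ∏ β ∈ S, (∏ i, y i ^ β i) ^ μ β := by
  calc |∏ i, y i ^ α i| = ∏ i, |y i| ^ (α i : ℝ) := by
        simp only [Finset.abs_prod, abs_pow, Real.rpow_natCast]
    _ = ∏ i, ∏ β ∈ S, (|y i| ^ (β i : ℝ)) ^ μ β := by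
        refine Finset.prod_congr rfl fun i _ => ?_
        rw [hα i, Real.rpow_sum_of_nonneg (abs_nonneg _)
          fun β hβ => mul_nonneg (hμ β hβ) (Nat.cast_nonneg _)]
        refine Finset.prod_congr rfl fun β _ => ?_
        rw [mul_comm, Real.rpow_mul (abs_nonneg _)]
    _ = ∏ β ∈ S, (∏ i, y i ^ β i) ^ μ β := by
        rw [Finset.prod_comm]
        refine Finset.prod_congr rfl fun β hβ => ?_
        rw [Real.finsetProd_rpow _ _ fun i _ => by positivity]
        congr 1
        refine Finset.prod_congr rfl fun i _ => ?_
        rw [Real.rpow_natCast, (heven β hβ i).pow_abs]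

theorem abs_prod_pow_le {c : (ι →₀ ℕ) → ℝ} (heven : ∀ β ∈ S, ∀ i, Even (β i))
    (hc : ∀ β ∈ S, 0 < c β) (hμ : ∀ β ∈ S, 0 ≤ μ β)
    (hα : ∀ i, (α i : ℝ) = ∑ β ∈ S, μ β * β i) (y : ι → ℝ) :
    |∏ i, y i ^ α i| ≤
      (∏ β ∈ S, (c β)⁻¹ ^ μ β) * (∑ β ∈ S, c β * ∏ i, y i ^ β i) ^ ∑ β ∈ S, μ β := by
  have hmon : ∀ β ∈ S, 0 ≤ ∏ i, y i ^ β i := fun β hβ =>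
    Finset.prod_nonneg fun i _ => (heven β hβ i).pow_nonneg _
  set v := ∑ β ∈ S, c β * ∏ i, y i ^ β i
  have hv : 0 ≤ v := Finset.sum_nonneg fun β hβ => mul_nonneg (hc β hβ).le (hmon β hβ)
  rw [abs_prod_pow_eq_prod_rpow heven hμ hα, Real.rpow_sum_of_nonneg hv hμ,
    ← Finset.prod_mul_distrib]
  refine Finset.prod_le_prod (fun β hβ => Real.rpow_nonneg (hmon β hβ) _) fun β hβ => ?_
  rw [← Real.mul_rpow (inv_nonneg.2 (hc β hβ).le) hv]
  refine Real.rpow_le_rpow (hmon β hβ) ?_ (hμ β hβ)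
  rw [← div_eq_inv_mul, le_div_iff₀' (hc β hβ)]
  exact Finset.single_le_sum (fun γ hγ => mul_nonneg (hc γ hγ).le (hmon γ hγ)) hβ

end Monomials

theorem expEmbed_injective {n : ℕ} : Function.Injective (expEmbed (n := n)) :=
  fun _ _ h => Finsupp.ext fun i => Nat.cast_injective (congrFun h i)

theorem expEmbed_eq_zero_iff {n : ℕ} {α : Fin n →₀ ℕ} : expEmbed α = 0 ↔ α = 0 :=
  expEmbed_injective.eq_iff' (funext fun _ => Nat.cast_zero)

theorem newtonInfty_eq_convexHull_V0 {n : ℕ} (f : MvPolynomial (Fin n) ℝ) :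
    newtonInfty f = convexHull ℝ (expEmbed '' ↑(V0 f)) := by
  have hfin : ∀ s : Finset (Fin n →₀ ℕ), (expEmbed '' (s : Set (Fin n →₀ ℕ))).Finite :=
    fun s => s.finite_toSet.image _
  refine subset_antisymm ?_ (convexHull_mono (Set.image_mono (Finset.filter_subset _ _)))
  have hext : Set.extremePoints ℝ (newtonInfty f) ⊆ expEmbed '' ↑(V0 f) := by
    intro y hy
    obtain ⟨β, hβ, rfl⟩ := extremePoints_convexHull_subset hy
    exact ⟨β, Finset.mem_filter.2 ⟨hβ, hy⟩, rfl⟩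
  calc newtonInfty f = closure (convexHull ℝ (Set.extremePoints ℝ (newtonInfty f))) :=
        (closure_convexHull_extremePoints ((hfin _).isCompact_convexHull ℝ)
          (convex_convexHull _ _)).symm
    _ ⊆ closure (convexHull ℝ (expEmbed '' ↑(V0 f))) := closure_mono (convexHull_mono hext)
    _ = convexHull ℝ (expEmbed '' ↑(V0 f)) := ((hfin _).isClosed_convexHull ℝ).closure_eq

theorem expEmbed_mem_newtonInfty {n : ℕ} {f : MvPolynomial (Fin n) ℝ} {α : Fin n →₀ ℕ}
    (hα : α ∈ f.support) : expEmbed α ∈ newtonInfty f :=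
  subset_convexHull ℝ _ ⟨α, by simp [hα], rfl⟩

theorem exists_subunit_combination_of_notMem_Vinf {n : ℕ} {f : MvPolynomial (Fin n) ℝ}
    (hreg : GemRegular f) {α : Fin n →₀ ℕ} (hα : α ∈ f.support) (hαV : α ∉ Vinf f) :
    ∃ μ : (Fin n →₀ ℕ) → ℝ, (∀ β ∈ Vinf f, 0 ≤ μ β) ∧ ∑ β ∈ Vinf f, μ β < 1 ∧
      ∀ i, (α i : ℝ) = ∑ β ∈ Vinf f, μ β * β i := by
  rcases eq_or_ne α 0 with rfl | hα0
  · exact ⟨0, by simp, by simp, by simp⟩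
  obtain ⟨z, hz, t, ht, ht1, hαz⟩ :
      ∃ z ∈ newtonInfty f, ∃ t : ℝ, 0 < t ∧ t < 1 ∧ expEmbed α = t • z := by
    obtain ⟨z, hz, a, t, ha, ht, hat, hαz⟩ := (convex_convexHull ℝ _).exists_mem_openSegment_zero
      (expEmbed_mem_newtonInfty hα) (expEmbed_eq_zero_iff.not.2 hα0)
      fun G hG hαG => by_contra fun h0 => hreg α ⟨hα, hαV, G, ⟨_, hαG⟩, hG, h0, hαG⟩
    exact ⟨z, hz, t, ht, by linarith, by simpa using hαz.symm⟩
  rw [newtonInfty_eq_convexHull_V0] at hz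
  obtain ⟨w, hw₀, hw₁, hwz⟩ :=
    Finset.exists_weights_of_mem_convexHull_image expEmbed_injective.injOn hz
  have hV : Vinf f ⊆ V0 f := Finset.erase_subset _ _
  refine ⟨fun β => t * w β, fun β hβ => mul_nonneg ht.le (hw₀ β (hV hβ)), ?_, fun i => ?_⟩
  · calc ∑ β ∈ Vinf f, t * w β ≤ ∑ β ∈ V0 f, t * w β :=
          Finset.sum_le_sum_of_subset_of_nonneg hV fun β hβ _ => mul_nonneg ht.le (hw₀ β hβ)
      _ < 1 := by rwa [← Finset.mul_sum, hw₁, mul_one]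
  · have := congrFun hαz i
    simp only [expEmbed, Pi.smul_apply, ← hwz, Finset.sum_apply, smul_eq_mul] at this
    rw [this, Finset.mul_sum, ← Finset.sum_erase _ (a := 0) (by simp)]
    exact Finset.sum_congr rfl fun β _ => by ring

/-- The vertex part `f^{V(f)}` of `f`. -/
def vertexPoly {n : ℕ} (f : MvPolynomial (Fin n) ℝ) : MvPolynomial (Fin n) ℝ :=
  ∑ α ∈ Vinf f, monomial α (f.coeff α)

section VertexPoly

variable {n : ℕ} {f : MvPolynomial (Fin n) ℝ}

theorem eval_vertexPoly (f : MvPolynomial (Fin n) ℝ) (y : Fin n → ℝ) :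
    eval y (vertexPoly f) = ∑ β ∈ Vinf f, f.coeff β * ∏ i, y i ^ β i := by
  simp only [vertexPoly, map_sum, eval_monomial, Finsupp.prod_pow]

theorem Vinf_subset_support (f : MvPolynomial (Fin n) ℝ) : Vinf f ⊆ f.support := by
  intro β hβ
  obtain ⟨hβ0, hβV⟩ := Finset.mem_erase.1 hβ
  exact (Finset.mem_insert.1 (Finset.mem_filter.1 hβV).1).resolve_left hβ0

theorem eval_sub_eval_vertexPoly (f : MvPolynomial (Fin n) ℝ) (y : Fin n → ℝ) :
    eval y f - eval y (vertexPoly f) = ∑ α ∈ f.support \ Vinf f, f.coeff α * ∏ i, y i ^ α i := by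
  rw [eval_vertexPoly, eval_eq', ← Finset.sum_sdiff (Vinf_subset_support f), add_sub_cancel_right]

theorem coeff_mul_prod_pow_nonneg (hC1 : CondC1 f) (hC2 : CondC2 f) {β : Fin n →₀ ℕ}
    (hβ : β ∈ Vinf f) (y : Fin n → ℝ) : 0 ≤ f.coeff β * ∏ i, y i ^ β i :=
  mul_nonneg (hC2 β hβ).le (Finset.prod_nonneg fun i _ => (hC1 β hβ i).pow_nonneg _)

theorem eval_vertexPoly_nonneg (hC1 : CondC1 f) (hC2 : CondC2 f) (y : Fin n → ℝ) :
    0 ≤ eval y (vertexPoly f) := by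
  rw [eval_vertexPoly]
  exact Finset.sum_nonneg fun β hβ => coeff_mul_prod_pow_nonneg hC1 hC2 hβ y

theorem coeff_mul_prod_pow_le_eval_vertexPoly (hC1 : CondC1 f) (hC2 : CondC2 f)
    {β : Fin n →₀ ℕ} (hβ : β ∈ Vinf f) (y : Fin n → ℝ) :
    f.coeff β * ∏ i, y i ^ β i ≤ eval y (vertexPoly f) := by
  rw [eval_vertexPoly]
  exact Finset.single_le_sum (fun γ hγ => coeff_mul_prod_pow_nonneg hC1 hC2 hγ y) hβ

theorem tendsto_eval_vertexPoly_cocompact (hC1 : CondC1 f) (hC2 : CondC2 f) (hC3 : CondC3 f) :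
    Tendsto (fun y => eval y (vertexPoly f)) (cocompact (Fin n → ℝ)) atTop := by
  rw [← Filter.coprodᵢ_cocompact, Filter.coprodᵢ, tendsto_iSup]
  intro i
  obtain ⟨k, hk, hkV⟩ := hC3 i
  have hpow : Tendsto (fun t : ℝ => f.coeff (Finsupp.single i (2 * k)) * t ^ (2 * k))
      (cocompact ℝ) atTop := by
    refine Tendsto.const_mul_atTop (hC2 _ hkV) ?_
    refine ((tendsto_pow_atTop (n := 2 * k) (by omega)).comp
      tendsto_norm_cocompact_atTop).congr fun t => ?_
    simp [Real.norm_eq_abs, (even_two_mul k).pow_abs]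
  refine tendsto_atTop_mono (fun y => ?_) (hpow.comp tendsto_comap)
  simpa [Finsupp.single_apply] using coeff_mul_prod_pow_le_eval_vertexPoly hC1 hC2 hkV y

theorem isLittleO_eval_sub_eval_vertexPoly (hreg : GemRegular f) (hC1 : CondC1 f)
    (hC2 : CondC2 f) (hC3 : CondC3 f) :
    (fun y => eval y f - eval y (vertexPoly f)) =o[cocompact (Fin n → ℝ)]
      fun y => eval y (vertexPoly f) := by
  simp_rw [eval_sub_eval_vertexPoly]
  refine IsLittleO.fun_sum fun α hα => ?_
  obtain ⟨hαf, hαV⟩ := Finset.mem_sdiff.1 hα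
  obtain ⟨μ, hμ, hμ1, hαμ⟩ := exists_subunit_combination_of_notMem_Vinf hreg hαf hαV
  have hdom : (fun y => f.coeff α * ∏ i, y i ^ α i) =O[cocompact (Fin n → ℝ)]
      fun y => eval y (vertexPoly f) ^ ∑ β ∈ Vinf f, μ β := by
    refine IsBigO.of_bound (|f.coeff α| * ∏ β ∈ Vinf f, (f.coeff β)⁻¹ ^ μ β)
      (Eventually.of_forall fun y => ?_)
    rw [Real.norm_eq_abs, Real.norm_eq_abs, abs_mul, mul_assoc,
      abs_of_nonneg (Real.rpow_nonneg (eval_vertexPoly_nonneg hC1 hC2 y) _), eval_vertexPoly]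
    exact mul_le_mul_of_nonneg_left (abs_prod_pow_le hC1 hC2 hμ hαμ y) (abs_nonneg _)
  exact hdom.trans_isLittleO ((isLittleO_rpow_atTop_of_lt_one hμ1).comp_tendsto
    (tendsto_eval_vertexPoly_cocompact hC1 hC2 hC3))

end VertexPoly

/-- Lemma: growth of gem regular polynomials is governed from below by
their vertex part `f^{V(f)}`. -/
theorem stmt8 {n : ℕ} (f : MvPolynomial (Fin n) ℝ) (hreg : GemRegular f)
    (hC1 : CondC1 f) (hC2 : CondC2 f) (hC3 : CondC3 f)
    (x : ℕ → (Fin n → ℝ)) (hx : Tendsto (fun k => ‖x k‖) atTop atTop) :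
    ∃ ε > (0 : ℝ), ∀ᶠ k in atTop,
      ε * MvPolynomial.eval (x k) (∑ α ∈ Vinf f, MvPolynomial.monomial α (f.coeff α))
        ≤ MvPolynomial.eval (x k) f := by
  have hx' : Tendsto x atTop (cocompact (Fin n → ℝ)) :=
    Metric.cobounded_eq_cocompact (α := Fin n → ℝ) ▸ tendsto_norm_atTop_iff_cobounded.1 hx
  have hR := (isLittleO_eval_sub_eval_vertexPoly hreg hC1 hC2 hC3).comp_tendsto hx'
  refine ⟨1 / 2, by norm_num, ?_⟩
  filter_upwards [hR.def (by norm_num : (0 : ℝ) < 1 / 2)] with k hk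
  have hv := eval_vertexPoly_nonneg hC1 hC2 (x k)
  simp only [Function.comp_apply, Real.norm_eq_abs, abs_of_nonneg hv] at hk
  change 1 / 2 * eval (x k) (vertexPoly f) ≤ eval (x k) f
  linarith [neg_abs_le (eval (x k) f - eval (x k) (vertexPoly f))]

end
end

section
/- Let f ∈ ℝ[x₁,…,xₙ] satisfy conditions (C1), (C2) and (C3), let λ_f be a map of minimal barycentric coordinates of f, and let α* ∈ D(f). Then the polynomial g_{α*}(x) := Σ_{α∈V₀(f)} |f_{α*}|·λ_f(α*,α)·x^α + f_{α*}·x^{α*} satisfies g_{α*}(x) ≥ 0 for all x ∈ ℝⁿ. -/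
/-!
Since `α*` lies in a face of `New∞(f)` avoiding the origin, it is nonzero, hence not a vertex,
so `λ_f` writes it as a convex combination `α* = Σ λ_α α` of vertices `α ∈ W_{α*}`. These have
even entries by (C1), so `x^α = |x|^α ≥ 0`, and the weighted AM-GM inequality gives
`|x^{α*}| = Π (x^α)^{λ_α} ≤ Σ λ_α x^α`. Multiplying by `|f_{α*}|` bounds `-f_{α*} x^{α*}`.
-/

open MvPolynomial Filter

noncomputable section

open scoped Classical

section Monomials

variable {ι : Type*} [Fintype ι]

lemma prod_pow_eq_prod_abs_pow_of_even {α : ι →₀ ℕ} (hα : ∀ i, Even (α i)) (x : ι → ℝ) :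
    ∏ i, x i ^ α i = ∏ i, |x i| ^ α i :=
  Finset.prod_congr rfl fun i _ => ((hα i).pow_abs (x i)).symm

lemma prod_prod_pow_rpow_eq_of_weighted_sum {W : Finset (ι →₀ ℕ)} {w : (ι →₀ ℕ) → ℝ}
    (hw : ∀ α ∈ W, 0 ≤ w α) {β : ι →₀ ℕ} (hβ : ∀ i, ∑ α ∈ W, w α * α i = β i)
    {y : ι → ℝ} (hy : ∀ i, 0 ≤ y i) :
    ∏ α ∈ W, (∏ i, y i ^ α i) ^ w α = ∏ i, y i ^ β i := by
  have hterm : ∀ α ∈ W, (∏ i, y i ^ α i) ^ w α = ∏ i, y i ^ (w α * α i) := by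
    intro α _
    simp_rw [← Real.rpow_natCast]
    rw [← Real.finsetProd_rpow _ _ fun i _ => Real.rpow_nonneg (hy i) _]
    refine Finset.prod_congr rfl fun i _ => ?_
    rw [← Real.rpow_mul (hy i), mul_comm]
  rw [Finset.prod_congr rfl hterm, Finset.prod_comm]
  refine Finset.prod_congr rfl fun i _ => ?_
  rw [← Real.rpow_sum_of_nonneg (hy i) fun α hα => mul_nonneg (hw α hα) (Nat.cast_nonneg _),
    hβ i, Real.rpow_natCast]

lemma abs_prod_pow_le_weighted_sum {W : Finset (ι →₀ ℕ)} {w : (ι →₀ ℕ) → ℝ}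
    (hw : ∀ α ∈ W, 0 ≤ w α) (hw1 : ∑ α ∈ W, w α = 1) {β : ι →₀ ℕ}
    (hβ : ∀ i, ∑ α ∈ W, w α * α i = β i) (heven : ∀ α ∈ W, ∀ i, Even (α i)) (x : ι → ℝ) :
    |∏ i, x i ^ β i| ≤ ∑ α ∈ W, w α * ∏ i, x i ^ α i := by
  have hmono : ∀ α ∈ W, ∏ i, x i ^ α i = ∏ i, |x i| ^ α i := fun α hα =>
    prod_pow_eq_prod_abs_pow_of_even (heven α hα) x
  calc |∏ i, x i ^ β i| = ∏ i, |x i| ^ β i := by simp only [Finset.abs_prod, abs_pow]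
    _ = ∏ α ∈ W, (∏ i, |x i| ^ α i) ^ w α :=
        (prod_prod_pow_rpow_eq_of_weighted_sum hw hβ fun i => abs_nonneg (x i)).symm
    _ ≤ ∑ α ∈ W, w α * ∏ i, |x i| ^ α i :=
        Real.geom_mean_le_arith_mean_weighted W _ _ hw hw1 fun α _ =>
          Finset.prod_nonneg fun i _ => pow_nonneg (abs_nonneg _) _
    _ = ∑ α ∈ W, w α * ∏ i, x i ^ α i :=
        Finset.sum_congr rfl fun α hα => by rw [hmono α hα]

end Monomials

section NewtonPolytope

variable {n : ℕ} {f : MvPolynomial (Fin n) ℝ}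

lemma expEmbed_zero : expEmbed (0 : Fin n →₀ ℕ) = 0 := by
  funext i
  simp [expEmbed]

lemma IsGemDegenerate.ne_zero {αs : Fin n →₀ ℕ} (h : IsGemDegenerate f αs) : αs ≠ 0 := by
  obtain ⟨-, -, G, -, -, hG0, hαG⟩ := h
  rintro rfl
  exact hG0 (expEmbed_zero ▸ hαG)

lemma IsGemDegenerate.mem_V0c {αs : Fin n →₀ ℕ} (h : IsGemDegenerate f αs) : αs ∈ V0c f :=
  Finset.mem_sdiff.mpr
    ⟨h.1, fun hV => h.2.1 (Finset.mem_erase.mpr ⟨h.ne_zero, hV⟩)⟩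

lemma CondC1.even_of_mem_V0 (hC1 : CondC1 f) {α : Fin n →₀ ℕ} (hα : α ∈ V0 f) (i : Fin n) :
    Even (α i) := by
  by_cases h0 : α = 0
  · simp [h0]
  · exact hC1 α (Finset.mem_erase.mpr ⟨h0, hα⟩) i

end NewtonPolytope

theorem stmt10_general {n : ℕ} (f : MvPolynomial (Fin n) ℝ)
    (hC1 : CondC1 f)
    (lam : (Fin n →₀ ℕ) → (Fin n →₀ ℕ) → ℝ) (hlam : IsMinBary f lam)
    (αs : Fin n →₀ ℕ) (hαs : IsGemDegenerate f αs) (x : Fin n → ℝ) :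
    0 ≤ (∑ α ∈ V0 f, |f.coeff αs| * lam αs α * ∏ i, x i ^ (α i))
        + f.coeff αs * ∏ i, x i ^ (αs i) := by
  obtain ⟨W, hWV, -, hpos, hzero, hsum1, hbary⟩ := hlam.2 αs hαs.mem_V0c
  have hβ : ∀ i, ∑ α ∈ W, lam αs α * α i = αs i := fun i => by
    simpa [expEmbed, Finset.sum_apply] using congrFun hbary i
  have hamgm := abs_prod_pow_le_weighted_sum (fun α hα => (hpos α hα).le) hsum1 hβ
    (fun α hα => hC1.even_of_mem_V0 (hWV hα)) x
  have hrestrict : ∑ α ∈ V0 f, |f.coeff αs| * lam αs α * ∏ i, x i ^ α i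
      = |f.coeff αs| * ∑ α ∈ W, lam αs α * ∏ i, x i ^ α i := by
    rw [Finset.mul_sum, ← Finset.sum_subset hWV fun α hα hαW => by simp [hzero α hα hαW]]
    exact Finset.sum_congr rfl fun _ _ => by ring
  have hneg : -(f.coeff αs * ∏ i, x i ^ αs i) ≤ |f.coeff αs| * |∏ i, x i ^ αs i| := by
    rw [← abs_mul]
    exact neg_le_abs _
  rw [hrestrict]
  linarith [mul_le_mul_of_nonneg_left hamgm (abs_nonneg (f.coeff αs))]

/-- for any gem degenerate exponent vector `α*` of `f`, the auxiliary
circuit polynomial `g_{α*}(x) = Σ_{α∈V₀(f)} |f_{α*}| λ_f(α*,α) x^α + f_{α*} x^{α*}` is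
globally nonnegative. -/
theorem stmt10 {n : ℕ} (f : MvPolynomial (Fin n) ℝ)
    (hC1 : CondC1 f) (hC2 : CondC2 f) (hC3 : CondC3 f)
    (lam : (Fin n →₀ ℕ) → (Fin n →₀ ℕ) → ℝ) (hlam : IsMinBary f lam)
    (αs : Fin n →₀ ℕ) (hαs : IsGemDegenerate f αs) (x : Fin n → ℝ) :
    0 ≤ (∑ α ∈ V0 f, |f.coeff αs| * lam αs α * ∏ i, x i ^ (α i))
        + f.coeff αs * ∏ i, x i ^ (αs i) :=
  stmt10_general f hC1 lam hlam αs hαs x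

end
end
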